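/- arXiv:1404.4396 — 2 statements merged into one kernel-verified Lean document; each statement's English description precedes it below -/
import Mathlib

section
/- Let H be a complex Hilbert space, T a bounded linear operator on H, and P an orthogonal projection on H whose range is invariant under T, i.e. (1 - P) T P = 0. If the self-commutator [T, T*] = T T* - T* T is a compact operator, then the compression P T P restricted to the range of P has compact self-commutator if and only if the compression (1 - P) T (1 - P) restricted to the kernel of P has compact self-commutator. -/
open ContinuousLinearMap

section aux


lemma aux_eq {R : Type*} [Ring R] (p t t' : R) (hp : p * p = p)
    (h : (1 - p) * t * p = 0) (h' : p * t' * (1 - p) = 0) :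
    (p * t * p) * (p * t' * p) - (p * t' * p) * (p * t * p)
      = p * (t * t' - t' * t) * p - (p * t * (1 - p)) * ((1 - p) * t' * p) := by
  have hq : ((1 : R) - p) * (1 - p) = 1 - p := by
    rw [sub_mul, one_mul, mul_sub, mul_one, hp]; abel
  have h1 : p * (t * p) = t * p := by
    rw [sub_mul, one_mul, sub_mul, sub_eq_zero] at h
    rw [← mul_assoc, ← h]
  have h2 : (p * t') * p = p * t' := by
    rw [mul_sub, mul_one, sub_eq_zero] at h'
    rw [← h']
  have e3 : (p * t * (1 - p)) * ((1 - p) * t' * p)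
      = p * (t * ((1 - p) * (t' * p))) := by
    rw [show (p * t * (1 - p)) * ((1 - p) * t' * p)
        = p * (t * (((1-p) * (1-p)) * (t' * p))) by noncomm_ring, hq]
  calc (p * t * p) * (p * t' * p) - (p * t' * p) * (p * t * p)
      = p * (t * ((p * p) * (t' * p))) - (p * t') * ((p * p) * (t * p)) := by noncomm_ring
    _ = p * (t * (p * (t' * p))) - (p * t') * (t * p) := by rw [hp, h1]
    _ = p * (t * t' - t' * t) * p - p * (t * ((1 - p) * (t' * p))) := by noncomm_ring
    _ = p * (t * t' - t' * t) * p - (p * t * (1 - p)) * ((1 - p) * t' * p) := by rw [e3]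




open ContinuousLinearMap Metric Set

variable {H : Type*} [NormedAddCommGroup H] [InnerProductSpace ℂ H] [CompleteSpace H]

local notation "⟪" x ", " y "⟫" => @inner ℂ _ _ x y

lemma sq_norm_apply_le (B : H →L[ℂ] H) (u : H) :
    ‖B u‖ ^ 2 ≤ ‖(ContinuousLinearMap.adjoint B ∘L B) u‖ * ‖u‖ := by
  have h1 : ⟪(ContinuousLinearMap.adjoint B ∘L B) u, u⟫ = (‖B u‖ : ℂ) ^ 2 := by
    rw [comp_apply, adjoint_inner_left, inner_self_eq_norm_sq_to_K]; norm_cast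
  calc ‖B u‖ ^ 2 = ‖⟪(ContinuousLinearMap.adjoint B ∘L B) u, u⟫‖ := by
        rw [h1]; norm_cast; simp [norm_pow]
    _ ≤ ‖(ContinuousLinearMap.adjoint B ∘L B) u‖ * ‖u‖ := norm_inner_le_norm _ _

lemma compact_of_adjoint_comp_compact (B : H →L[ℂ] H)
    (h : IsCompactOperator ⇑(ContinuousLinearMap.adjoint B ∘L B)) :
    IsCompactOperator ⇑B := by
  set A := ContinuousLinearMap.adjoint B ∘L B with hA
  suffices hgoal : IsCompact (closure (⇑B '' closedBall (0 : H) 1)) from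
    (isCompactOperator_iff_isCompact_closure_image_closedBall (𝕜₁ := ℂ)
      (B : H →ₗ[ℂ] H) one_pos).mpr hgoal
  have hAc : IsCompact (closure (⇑A '' closedBall (0 : H) 1)) :=
    h.isCompact_closure_image_of_bounded (𝕜₁ := ℂ) (f := (A : H →ₗ[ℂ] H))
      isBounded_closedBall
  refine TotallyBounded.isCompact_of_isClosed ((totallyBounded_closure).2 ?_) isClosed_closure
  rw [Metric.totallyBounded_iff]
  intro ε hε
  obtain ⟨s, hsfin, hscov⟩ := Metric.totallyBounded_iff.1 hAc.totallyBounded (ε ^ 2 / 16)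
    (by positivity)
  classical
  let g : H → H := fun y =>
    if hy : ∃ x ∈ closedBall (0 : H) 1, A x ∈ ball y (ε ^ 2 / 16) then hy.choose else 0
  refine ⟨(fun y => B (g y)) '' s, hsfin.image _, ?_⟩
  rintro - ⟨x, hx, rfl⟩
  have hAx : A x ∈ ⋃ y ∈ s, ball y (ε ^ 2 / 16) :=
    hscov (subset_closure (mem_image_of_mem _ hx))
  obtain ⟨y, hy, hxy⟩ := mem_iUnion₂.1 hAx
  have hex : ∃ x' ∈ closedBall (0 : H) 1, A x' ∈ ball y (ε ^ 2 / 16) := ⟨x, hx, hxy⟩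
  have hgdef : g y = hex.choose := by simp only [g]; rw [dif_pos hex]
  have hgy : g y ∈ closedBall (0 : H) 1 ∧ A (g y) ∈ ball y (ε ^ 2 / 16) := by
    rw [hgdef]; exact ⟨hex.choose_spec.1, hex.choose_spec.2⟩
  refine mem_iUnion₂.2 ⟨B (g y), mem_image_of_mem _ hy, ?_⟩
  rw [mem_ball, dist_eq_norm]
  have hxx' : ‖x - g y‖ ≤ 2 := by
    calc ‖x - g y‖ ≤ ‖x‖ + ‖g y‖ := norm_sub_le _ _
      _ ≤ 1 + 1 := by
          gcongr
          · simpa using mem_closedBall_zero_iff.1 hx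
          · simpa using mem_closedBall_zero_iff.1 hgy.1
      _ = 2 := by norm_num
  have hAxx' : ‖A (x - g y)‖ < ε ^ 2 / 8 := by
    have : ‖A x - A (g y)‖ < ε ^ 2 / 8 := by
      calc ‖A x - A (g y)‖ ≤ ‖A x - y‖ + ‖y - A (g y)‖ := norm_sub_le_norm_sub_add_norm_sub _ _ _
        _ < ε ^ 2 / 16 + ε ^ 2 / 16 := by
            apply add_lt_add
            · simpa [dist_eq_norm] using hxy
            · simpa [dist_eq_norm, norm_sub_rev] using hgy.2
        _ = ε ^ 2 / 8 := by ring
    simpa [map_sub] using this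
  have hkey : ‖B (x - g y)‖ ^ 2 ≤ ‖A (x - g y)‖ * ‖x - g y‖ := sq_norm_apply_le B _
  have hsq : ‖B (x - g y)‖ ^ 2 < ε ^ 2 / 4 := by nlinarith [norm_nonneg (A (x - g y))]
  have : ‖B x - B (g y)‖ ^ 2 < ε ^ 2 / 4 := by simpa [map_sub] using hsq
  nlinarith [norm_nonneg (B x - B (g y))]

end aux

/-- If `P` is an orthogonal projection whose range is invariant under `T`, and `T` is
essentially normal, then the compression of `T` to the range of `P` is essentially normal
iff the compression of `T` to the kernel of `P` (the range of `1 - P`) is. The self-commutator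
of the restriction of `P T P` to `ran P` is the restriction of `PTPT*P - PT*PTP`, whose
compactness is equivalent to compactness of the full operator, and similarly for `1 - P`. -/
theorem stmt0 {H : Type*} [NormedAddCommGroup H] [InnerProductSpace ℂ H] [CompleteSpace H]
    (T P : H →L[ℂ] H) (hPidem : P ∘L P = P) (hPsa : ContinuousLinearMap.adjoint P = P)
    (hinv : (1 - P) ∘L T ∘L P = 0)
    (hT : IsCompactOperator
      ⇑(T ∘L ContinuousLinearMap.adjoint T - ContinuousLinearMap.adjoint T ∘L T)) :
    IsCompactOperator
        ⇑(((P ∘L T ∘L P) ∘L (P ∘L ContinuousLinearMap.adjoint T ∘L P)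
          - (P ∘L ContinuousLinearMap.adjoint T ∘L P) ∘L (P ∘L T ∘L P) : H →L[ℂ] H)) ↔
      IsCompactOperator
        ⇑((((1 - P) ∘L T ∘L (1 - P)) ∘L ((1 - P) ∘L ContinuousLinearMap.adjoint T ∘L (1 - P))
          - ((1 - P) ∘L ContinuousLinearMap.adjoint T ∘L (1 - P))
            ∘L ((1 - P) ∘L T ∘L (1 - P)) : H →L[ℂ] H)) := by
  set t' := ContinuousLinearMap.adjoint T with ht'
  have hp : P * P = P := hPidem
  have hm : (1 - P) * T * P = 0 := by rw [mul_assoc]; exact hinv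
  have hm' : P * t' * (1 - P) = 0 := by
    have h0 := congrArg star hm
    simp only [star_mul, star_zero, star_sub, star_one, star_eq_adjoint, hPsa, ← ht',
      ← mul_assoc] at h0
    exact h0
  have hT' : IsCompactOperator ⇑(T * t' - t' * T) := hT
  have eq1 := aux_eq P T t' hp hm hm'
  have eq2 := aux_eq (1 - P) t' T
    (by rw [sub_mul, one_mul, mul_sub, mul_one, hp]; abel)
    (by rw [sub_sub_cancel]; exact hm') (by rw [sub_sub_cancel]; exact hm)
  simp only [sub_sub_cancel] at eq2
  set B : H →L[ℂ] H := P * T * (1 - P) with hB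
  set C : H →L[ℂ] H := (1 - P) * t' * P with hC
  have hadjB : ContinuousLinearMap.adjoint B = C := by
    rw [← star_eq_adjoint, hB, hC, star_mul, star_mul, star_sub, star_one, star_eq_adjoint,
      star_eq_adjoint, hPsa, ← ht', mul_assoc]
  have hadjC : ContinuousLinearMap.adjoint C = B := by
    rw [← hadjB, adjoint_adjoint]
  -- compactness helpers
  have hconj : ∀ (a s b : H →L[ℂ] H), IsCompactOperator ⇑s → IsCompactOperator ⇑(a * s * b) := by
    intro a s b hs
    have h2 : IsCompactOperator (⇑a ∘ (⇑s ∘ ⇑b)) := (hs.comp_clm b).clm_comp a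
    exact h2
  have hsub : ∀ (X Y : H →L[ℂ] H), IsCompactOperator ⇑X → IsCompactOperator ⇑Y →
      IsCompactOperator ⇑(X - Y) := by
    intro X Y hX hY
    have := hX.sub hY
    rwa [← coe_sub'] at this
  have hadd : ∀ (X Y : H →L[ℂ] H), IsCompactOperator ⇑X → IsCompactOperator ⇑Y →
      IsCompactOperator ⇑(X + Y) := by
    intro X Y hX hY
    have := hX.add hY
    rwa [← coe_add'] at this
  have hPc : IsCompactOperator ⇑(P * (T * t' - t' * T) * P) := hconj _ _ _ hT'
  have hQc : IsCompactOperator ⇑((1 - P) * (T * t' - t' * T) * (1 - P)) := hconj _ _ _ hT'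
  -- identify goal operators
  have hgoal1 : ((P ∘L T ∘L P) ∘L (P ∘L t' ∘L P) - (P ∘L t' ∘L P) ∘L (P ∘L T ∘L P) : H →L[ℂ] H)
      = P * (T * t' - t' * T) * P - B * C := by
    rw [← eq1]; simp only [mul_def, mul_assoc]; rfl
  have hgoal2 : (((1 - P) ∘L T ∘L (1 - P)) ∘L ((1 - P) ∘L t' ∘L (1 - P))
        - ((1 - P) ∘L t' ∘L (1 - P)) ∘L ((1 - P) ∘L T ∘L (1 - P)) : H →L[ℂ] H)
      = (1 - P) * (T * t' - t' * T) * (1 - P) + C * B := by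
    have hneg : (((1 - P) ∘L T ∘L (1 - P)) ∘L ((1 - P) ∘L t' ∘L (1 - P))
        - ((1 - P) ∘L t' ∘L (1 - P)) ∘L ((1 - P) ∘L T ∘L (1 - P)) : H →L[ℂ] H)
        = -(((1-P) * t' * (1-P)) * ((1-P) * T * (1-P))
            - ((1-P) * T * (1-P)) * ((1-P) * t' * (1-P))) := by
      rw [neg_sub]; simp only [mul_def, mul_assoc]; rfl
    rw [hneg, eq2]; noncomm_ring
  rw [hgoal1, hgoal2]
  constructor
  · intro h1
    have hBC : IsCompactOperator ⇑(B * C) := by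
      have hXeq : B * C = P * (T * t' - t' * T) * P
          - (P * (T * t' - t' * T) * P - B * C) := by abel
      rw [hXeq]
      exact hsub _ _ hPc h1
    have hCc : IsCompactOperator ⇑C := by
      apply compact_of_adjoint_comp_compact
      rw [show (ContinuousLinearMap.adjoint C ∘L C) = B * C from by rw [← hadjC]; rfl]
      exact hBC
    exact hadd _ _ hQc (hCc.comp_clm B)
  · intro h2
    have hCB : IsCompactOperator ⇑(C * B) := by
      have hXeq : C * B = ((1 - P) * (T * t' - t' * T) * (1 - P) + C * B)
          - (1 - P) * (T * t' - t' * T) * (1 - P) := by abel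
      rw [hXeq]
      exact hsub _ _ h2 hQc
    have hBc : IsCompactOperator ⇑B := by
      apply compact_of_adjoint_comp_compact
      rw [show (ContinuousLinearMap.adjoint B ∘L B) = C * B from by rw [hadjB]; rfl]
      exact hCB
    have : IsCompactOperator ⇑(B * C) := hBc.comp_clm C
    exact hsub _ _ hPc this
end

section
/- Let H₁, H₂ be complex Hilbert spaces, X : H₁ → H₂ an invertible bounded operator with polar decomposition X = U S where S = (X*X)^{1/2} is positive invertible and U is unitary. Suppose σ₁ : A → B(H₁) and σ₂ : A → B(H₂) are maps from a set A such that σ₂(p) X = X σ₁(p) for all p ∈ A. If for every p ∈ A the commutator [X*X, σ₁(p)] is compact, then for every p ∈ A the operator σ₂(p) - U σ₁(p) U* is compact; in particular, if every σ₁(p) is essentially normal then every σ₂(p) is essentially normal. -/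
/-!
`S = √(X*X)` is a continuous function of `X*X`. The operators `b` such that both `b` and `b*`
commute with `σ₁ p` modulo compact operators form a norm-closed *-subalgebra; it contains the
self-adjoint `X*X`, hence `S`, so `[S, σ₁ p]` is compact. From `σ₂ p X = X σ₁ p` and `U* = S X⁻¹`
one gets `σ₂ p - U σ₁ p U* = U [S, σ₁ p] X⁻¹`. Essential normality passes to isometric conjugates
and survives compact perturbations, because adjoints of compact operators are compact.
-/

open ContinuousLinearMap Metric

theorem TotallyBounded.image_of_forall_dist_lt {α β γ : Type*}
    [PseudoMetricSpace β] [PseudoMetricSpace γ] {f : α → β} {g : α → γ} {s : Set α}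
    (hg : TotallyBounded (g '' s))
    (hfg : ∀ ε > 0, ∃ δ > 0, ∀ x ∈ s, ∀ y ∈ s, dist (g x) (g y) < δ → dist (f x) (f y) < ε) :
    TotallyBounded (f '' s) := by
  refine totallyBounded_iff.2 fun ε hε => ?_
  obtain ⟨δ, hδ, hδε⟩ := hfg ε hε
  obtain ⟨t, hts, ht, hcover⟩ :=
    Set.exists_subset_image_finite_and.1 (finite_approx_of_totallyBounded hg δ hδ)
  refine ⟨f '' t, ht.image f, ?_⟩
  rintro _ ⟨x, hx, rfl⟩
  obtain ⟨_, ⟨y, hy, rfl⟩, hxy⟩ := Set.mem_iUnion₂.1 (hcover ⟨x, hx, rfl⟩)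
  exact Set.mem_biUnion ⟨y, hy, rfl⟩ (hδε x hx y (hts hy) hxy)

section Adjoint

variable {𝕜 E F : Type*} [RCLike 𝕜]
  [NormedAddCommGroup E] [InnerProductSpace 𝕜 E] [CompleteSpace E]
  [NormedAddCommGroup F] [InnerProductSpace 𝕜 F] [CompleteSpace F]

theorem norm_adjoint_apply_sq_le (T : E →L[𝕜] F) (y : F) :
    ‖adjoint T y‖ ^ 2 ≤ ‖y‖ * ‖(T ∘L adjoint T) y‖ := by
  calc ‖adjoint T y‖ ^ 2 = RCLike.re (inner 𝕜 y ((T ∘L adjoint T) y)) := by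
        rw [apply_norm_sq_eq_inner_adjoint_right, adjoint_adjoint]
    _ ≤ ‖y‖ * ‖(T ∘L adjoint T) y‖ :=
        (RCLike.re_le_norm _).trans (norm_inner_le_norm _ _)

theorem IsCompactOperator.adjoint {T : E →L[𝕜] F} (hT : IsCompactOperator T) :
    IsCompactOperator (ContinuousLinearMap.adjoint T) := by
  set A := ContinuousLinearMap.adjoint T
  have hTA : TotallyBounded ((T ∘L A) '' closedBall 0 1) :=
    ((hT.comp_clm A).isCompact_closure_image_closedBall 1).totallyBounded.subset subset_closure
  have hA : TotallyBounded (A '' closedBall 0 1) := by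
    refine hTA.image_of_forall_dist_lt fun ε hε => ⟨ε ^ 2 / 2, by positivity, ?_⟩
    intro x hx y hy hxy
    rw [dist_eq_norm, ← map_sub] at hxy ⊢
    have hxy2 : ‖x - y‖ ≤ 2 := by
      rw [mem_closedBall_zero_iff] at hx hy
      linarith [norm_sub_le x y]
    have hsq : ‖A (x - y)‖ ^ 2 < ε ^ 2 := by
      nlinarith [norm_adjoint_apply_sq_le T (x - y), norm_nonneg ((T ∘L A) (x - y))]
    exact lt_of_pow_lt_pow_left₀ 2 hε.le hsq
  exact (isCompactOperator_iff_isCompact_closure_image_closedBall (A : F →ₗ[𝕜] E)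
    zero_lt_one).2 (hA.closure.isCompact_of_isClosed isClosed_closure)

end Adjoint

section Ideal

variable (𝕜 E : Type*) [NontriviallyNormedField 𝕜] [NormedAddCommGroup E] [NormedSpace 𝕜 E]

def compactOperatorIdeal : Ideal (E →L[𝕜] E) where
  carrier := {T | IsCompactOperator T}
  add_mem' := IsCompactOperator.add
  zero_mem' := isCompactOperator_zero
  smul_mem' b _ hT := hT.clm_comp b

instance : (compactOperatorIdeal 𝕜 E).IsTwoSided := ⟨fun b hT => hT.comp_clm b⟩

variable {𝕜 E}

theorem isClosed_compactOperatorIdeal [CompleteSpace E] :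
    IsClosed (compactOperatorIdeal 𝕜 E : Set (E →L[𝕜] E)) :=
  isClosed_setOfPred_isCompactOperator

abbrev calkinMap : (E →L[𝕜] E) →+* (E →L[𝕜] E) ⧸ compactOperatorIdeal 𝕜 E :=
  Ideal.Quotient.mk _

theorem calkinMap_eq_calkinMap_iff {S T : E →L[𝕜] E} :
    calkinMap S = calkinMap T ↔ IsCompactOperator (S - T) :=
  Ideal.Quotient.eq

theorem calkinMap_eq_zero_iff {T : E →L[𝕜] E} : calkinMap T = 0 ↔ IsCompactOperator T :=
  Ideal.Quotient.eq_zero_iff_mem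

theorem commute_calkinMap_iff {S T : E →L[𝕜] E} :
    Commute (calkinMap S) (calkinMap T) ↔ IsCompactOperator (S * T - T * S) := by
  rw [Commute, SemiconjBy, ← map_mul, ← map_mul, calkinMap_eq_calkinMap_iff]

end Ideal

section EssentiallyNormal

variable {𝕜 E F : Type*} [RCLike 𝕜]
  [NormedAddCommGroup E] [InnerProductSpace 𝕜 E] [CompleteSpace E]
  [NormedAddCommGroup F] [InnerProductSpace 𝕜 F] [CompleteSpace F]

def IsEssentiallyNormal (T : E →L[𝕜] E) : Prop :=
  IsCompactOperator (T ∘L adjoint T - adjoint T ∘L T)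

theorem IsEssentiallyNormal.of_isCompactOperator_sub {T T' : E →L[𝕜] E}
    (hT : IsEssentiallyNormal T) (h : IsCompactOperator (T' - T)) : IsEssentiallyNormal T' := by
  have h₁ : calkinMap T' = calkinMap T := calkinMap_eq_calkinMap_iff.2 h
  have h₂ : calkinMap (adjoint T') = calkinMap (adjoint T) :=
    calkinMap_eq_calkinMap_iff.2 <| by rw [← map_sub]; exact h.adjoint
  have hT' : calkinMap (T' * adjoint T' - adjoint T' * T') =
      calkinMap (T * adjoint T - adjoint T * T) := by
    simp only [map_sub, map_mul, h₁, h₂]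
  exact calkinMap_eq_zero_iff.1 (hT'.trans (calkinMap_eq_zero_iff.2 hT))

theorem IsEssentiallyNormal.conj {T : E →L[𝕜] E} (hT : IsEssentiallyNormal T) {U : E →L[𝕜] F}
    (hU : adjoint U ∘L U = 1) : IsEssentiallyNormal (U ∘L T ∘L adjoint U) := by
  have hUU (A : F →L[𝕜] E) : adjoint U ∘L U ∘L A = A := by
    rw [← comp_assoc, hU, one_def, id_comp]
  have h : (U ∘L T ∘L adjoint U) ∘L adjoint (U ∘L T ∘L adjoint U)
      - adjoint (U ∘L T ∘L adjoint U) ∘L (U ∘L T ∘L adjoint U)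
      = U ∘L (T ∘L adjoint T - adjoint T ∘L T) ∘L adjoint U := by
    simp only [adjoint_comp, adjoint_adjoint, comp_assoc, hUU, sub_comp, comp_sub]
  unfold IsEssentiallyNormal
  rw [h]
  exact (hT.comp_clm _).clm_comp U

end EssentiallyNormal

section EssentialCommutant

variable {E : Type*} [NormedAddCommGroup E] [InnerProductSpace ℂ E] [CompleteSpace E]

/-- The largest star subalgebra inside the essential commutant of `T`: star-closedness is what
`cfc_mem` requires. -/
def starEssentialCommutant (T : E →L[ℂ] E) : StarSubalgebra ℂ (E →L[ℂ] E) where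
  carrier :=
    {b | Commute (calkinMap b) (calkinMap T) ∧ Commute (calkinMap (star b)) (calkinMap T)}
  mul_mem' {b c} hb hc := by
    simp only [Set.mem_ofPred_eq, star_mul, map_mul] at *
    exact ⟨hb.1.mul_left hc.1, hc.2.mul_left hb.2⟩
  one_mem' := by simp
  add_mem' {b c} hb hc := by
    simp only [Set.mem_ofPred_eq, star_add, map_add] at *
    exact ⟨hb.1.add_left hc.1, hb.2.add_left hc.2⟩
  zero_mem' := by simp
  algebraMap_mem' r := by
    rw [Set.mem_ofPred_eq, ← algebraMap_star_comm]
    exact ⟨(Algebra.commute_algebraMap_left r T).map _,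
      (Algebra.commute_algebraMap_left (star r) T).map _⟩
  star_mem' {b} hb := by
    simp only [Set.mem_ofPred_eq, star_star] at *
    exact hb.symm

theorem isClosed_starEssentialCommutant (T : E →L[ℂ] E) :
    IsClosed (starEssentialCommutant T : Set (E →L[ℂ] E)) := by
  have h : (starEssentialCommutant T : Set (E →L[ℂ] E)) =
      (fun b => b * T - T * b) ⁻¹' compactOperatorIdeal ℂ E ∩
        (fun b => star b * T - T * star b) ⁻¹' compactOperatorIdeal ℂ E := by
    ext b
    exact and_congr commute_calkinMap_iff commute_calkinMap_iff
  rw [h]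
  exact (isClosed_compactOperatorIdeal.preimage (by fun_prop)).inter
    (isClosed_compactOperatorIdeal.preimage (by fun_prop))

theorem mem_starEssentialCommutant_of_isSelfAdjoint {a T : E →L[ℂ] E} (ha : IsSelfAdjoint a)
    (h : IsCompactOperator (a * T - T * a)) : a ∈ starEssentialCommutant T :=
  ⟨commute_calkinMap_iff.2 h, by rw [ha.star_eq]; exact commute_calkinMap_iff.2 h⟩

theorem IsSelfAdjoint.isCompactOperator_cfc_commutator {a T : E →L[ℂ] E}
    (ha : IsSelfAdjoint a) (h : IsCompactOperator (a * T - T * a)) (f : ℝ → ℝ) :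
    IsCompactOperator (cfc f a * T - T * cfc f a) :=
  commute_calkinMap_iff.1 (cfc_mem (hs := isClosed_starEssentialCommutant T) f
    (mem_starEssentialCommutant_of_isSelfAdjoint ha h)).1

theorem isCompactOperator_commutator_of_mul_self {S T : E →L[ℂ] E} (hS : 0 ≤ S)
    (h : IsCompactOperator (S * S * T - T * (S * S))) : IsCompactOperator (S * T - T * S) := by
  have hSS : 0 ≤ S * S := hS.isSelfAdjoint.mul_self_nonneg
  have hS_eq : cfc Real.sqrt (S * S) = S := by
    rw [← cfcₙ_eq_cfc, ← CFC.sqrt_eq_real_sqrt _ hSS, CFC.sqrt_mul_self S hS]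
  simpa only [hS_eq] using hSS.isSelfAdjoint.isCompactOperator_cfc_commutator h Real.sqrt

end EssentialCommutant

section Intertwining

variable {𝕜 E F : Type*} [NontriviallyNormedField 𝕜]
  [NormedAddCommGroup E] [NormedSpace 𝕜 E] [NormedAddCommGroup F] [NormedSpace 𝕜 F]

theorem sub_conj_eq_of_comp_eq_comp {σ₁ : E →L[𝕜] E} {σ₂ : F →L[𝕜] F} {X U : E →L[𝕜] F}
    {Y V : F →L[𝕜] E} {S : E →L[𝕜] E} (hXY : X ∘L Y = 1) (hXUS : X = U ∘L S) (hVU : V ∘L U = 1)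
    (h : σ₂ ∘L X = X ∘L σ₁) :
    σ₂ - U ∘L σ₁ ∘L V = U ∘L (S ∘L σ₁ - σ₁ ∘L S) ∘L Y := by
  have hσ₂ : σ₂ = U ∘L S ∘L σ₁ ∘L Y := by
    rw [← comp_id σ₂, ← one_def, ← hXY, ← comp_assoc, h, hXUS]
    simp only [comp_assoc]
  have hV : V = S ∘L Y := by
    rw [← comp_id V, ← one_def, ← hXY, hXUS, ← comp_assoc, ← comp_assoc, hVU, one_def, id_comp]
  rw [hσ₂, hV, sub_comp, comp_sub]
  simp only [comp_assoc]

end Intertwining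

theorem stmt3_general {H₁ H₂ : Type*}
    [NormedAddCommGroup H₁] [InnerProductSpace ℂ H₁] [CompleteSpace H₁]
    [NormedAddCommGroup H₂] [InnerProductSpace ℂ H₂] [CompleteSpace H₂]
    {A : Type*} (σ₁ : A → (H₁ →L[ℂ] H₁)) (σ₂ : A → (H₂ →L[ℂ] H₂))
    (X : H₁ →L[ℂ] H₂) (Xinv : H₂ →L[ℂ] H₁)
    (hXinv : X ∘L Xinv = 1 ∧ Xinv ∘L X = 1)
    (S : H₁ →L[ℂ] H₁) (U : H₁ →L[ℂ] H₂)
    (hpolar : X = U ∘L S)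
    (hS_sa : ContinuousLinearMap.adjoint S = S)
    (hS_pos : ∀ x : H₁, 0 ≤ (inner ℂ (S x) x : ℂ).re ∧ (inner ℂ (S x) x : ℂ).im = 0)
    (hS_sq : S ∘L S = ContinuousLinearMap.adjoint X ∘L X)
    (hU : ContinuousLinearMap.adjoint U ∘L U = 1 ∧ U ∘L ContinuousLinearMap.adjoint U = 1)
    (hintertwine : ∀ p : A, σ₂ p ∘L X = X ∘L σ₁ p)
    (hcompact : ∀ p : A,
      IsCompactOperator
        ⇑(((ContinuousLinearMap.adjoint X ∘L X) ∘L σ₁ p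
          - σ₁ p ∘L (ContinuousLinearMap.adjoint X ∘L X) : H₁ →L[ℂ] H₁))) :
    (∀ p : A,
      IsCompactOperator
        ⇑((σ₂ p - U ∘L σ₁ p ∘L ContinuousLinearMap.adjoint U : H₂ →L[ℂ] H₂))) ∧
    ((∀ p : A, IsCompactOperator
        ⇑((σ₁ p ∘L ContinuousLinearMap.adjoint (σ₁ p)
          - ContinuousLinearMap.adjoint (σ₁ p) ∘L σ₁ p : H₁ →L[ℂ] H₁))) →
      ∀ p : A, IsCompactOperator
        ⇑((σ₂ p ∘L ContinuousLinearMap.adjoint (σ₂ p)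
          - ContinuousLinearMap.adjoint (σ₂ p) ∘L σ₂ p : H₂ →L[ℂ] H₂))) := by
  have hS : 0 ≤ S := by
    rw [nonneg_iff_isPositive, isPositive_def']
    exact ⟨hS_sa, fun x => (hS_pos x).1⟩
  have hcomm (p : A) : IsCompactOperator (S * σ₁ p - σ₁ p * S) := by
    have h := hcompact p
    rw [← hS_sq] at h
    exact isCompactOperator_commutator_of_mul_self hS h
  have hconj (p : A) : IsCompactOperator (σ₂ p - U ∘L σ₁ p ∘L ContinuousLinearMap.adjoint U) := by
    rw [sub_conj_eq_of_comp_eq_comp hXinv.1 hpolar hU.1 (hintertwine p)]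
    exact ((hcomm p).comp_clm Xinv).clm_comp U
  refine ⟨hconj, fun h p => ?_⟩
  exact (IsEssentiallyNormal.conj (h p) hU.1).of_isCompactOperator_sub (hconj p)

/-- Polar decomposition argument: if an invertible operator `X = U S` (with `S = (X*X)^{1/2}`
positive invertible, `U` unitary) intertwines two families `σ₁, σ₂`, and all commutators
`[X*X, σ₁ p]` are compact, then `σ₂ p - U σ₁ p U*` is compact for all `p`; in particular if
every `σ₁ p` is essentially normal then so is every `σ₂ p`. -/
theorem stmt3 {H₁ H₂ : Type*}
    [NormedAddCommGroup H₁] [InnerProductSpace ℂ H₁] [CompleteSpace H₁]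
    [NormedAddCommGroup H₂] [InnerProductSpace ℂ H₂] [CompleteSpace H₂]
    {A : Type*} (σ₁ : A → (H₁ →L[ℂ] H₁)) (σ₂ : A → (H₂ →L[ℂ] H₂))
    (X : H₁ →L[ℂ] H₂) (Xinv : H₂ →L[ℂ] H₁)
    (hXinv : X ∘L Xinv = 1 ∧ Xinv ∘L X = 1)
    (S : H₁ →L[ℂ] H₁) (U : H₁ →L[ℂ] H₂)
    (hpolar : X = U ∘L S)
    (hS_sa : ContinuousLinearMap.adjoint S = S)
    (hS_pos : ∀ x : H₁, 0 ≤ (inner ℂ (S x) x : ℂ).re ∧ (inner ℂ (S x) x : ℂ).im = 0)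
    (hS_sq : S ∘L S = ContinuousLinearMap.adjoint X ∘L X)
    (hS_inv : ∃ Sinv : H₁ →L[ℂ] H₁, S ∘L Sinv = 1 ∧ Sinv ∘L S = 1)
    (hU : ContinuousLinearMap.adjoint U ∘L U = 1 ∧ U ∘L ContinuousLinearMap.adjoint U = 1)
    (hintertwine : ∀ p : A, σ₂ p ∘L X = X ∘L σ₁ p)
    (hcompact : ∀ p : A,
      IsCompactOperator
        ⇑(((ContinuousLinearMap.adjoint X ∘L X) ∘L σ₁ p
          - σ₁ p ∘L (ContinuousLinearMap.adjoint X ∘L X) : H₁ →L[ℂ] H₁))) :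
    (∀ p : A,
      IsCompactOperator
        ⇑((σ₂ p - U ∘L σ₁ p ∘L ContinuousLinearMap.adjoint U : H₂ →L[ℂ] H₂))) ∧
    ((∀ p : A, IsCompactOperator
        ⇑((σ₁ p ∘L ContinuousLinearMap.adjoint (σ₁ p)
          - ContinuousLinearMap.adjoint (σ₁ p) ∘L σ₁ p : H₁ →L[ℂ] H₁))) →
      ∀ p : A, IsCompactOperator
        ⇑((σ₂ p ∘L ContinuousLinearMap.adjoint (σ₂ p)
          - ContinuousLinearMap.adjoint (σ₂ p) ∘L σ₂ p : H₂ →L[ℂ] H₂))) :=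
  stmt3_general σ₁ σ₂ X Xinv hXinv S U hpolar hS_sa hS_pos hS_sq hU hintertwine hcompact
end
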